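/- Let X be a T0, locally compact, supercompact topological space. Then there exists a continuous map r : W(X) → X (with W(X) carrying the topology ^S T) such that r(pure x) = x for all x ∈ X, and for every ultrafilter U on X the set of cluster points of U in X equals the closure of the singleton {r(U)}. (Proposition 4.3 of the paper.) -/

import Mathlib

/-!
In a supercompact space every ultrafilter `U` has a point `r U` whose specializations are
exactly the cluster points of `U`; in particular `U` converges to `r U`. For `r` to be
continuous for `^S T`, take an open `G ∋ r U` and a compact neighbourhood `K ⊆ G` of `r U`:
every ultrafilter `V` containing `interior K` has a cluster point in `K ⊆ G`, and since that
cluster point specializes from `r V`, the open set `G` contains `r V` as well.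
Finally `r (pure x)` and `x` have the same specializations, so they coincide in a T0 space.
-/

open Filter Topology

/-- The "standard" topology `^S T` on the space of ultrafilters `W(X) = Ultrafilter X`,
generated by the sets `Ĝ = {U | G ∈ U}` for `G` open in `X`. -/
def sTop (X : Type*) [TopologicalSpace X] : TopologicalSpace (Ultrafilter X) :=
  TopologicalSpace.generateFrom
    {s : Set (Ultrafilter X) | ∃ G : Set X, IsOpen G ∧ s = {U : Ultrafilter X | G ∈ U}}

section

variable {X : Type*} [TopologicalSpace X]

theorem isOpen_sTop_setOf_mem {G : Set X} (hG : IsOpen G) :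
    IsOpen[sTop X] {U : Ultrafilter X | G ∈ U} :=
  TopologicalSpace.isOpen_generateFrom_of_mem ⟨G, hG, rfl⟩

theorem continuous_sTop_of_clusterPt_iff_specializes [LocallyCompactSpace X]
    {r : Ultrafilter X → X} (hr : ∀ (U : Ultrafilter X) (x : X), ClusterPt x ↑U ↔ r U ⤳ x) :
    Continuous[sTop X, _] r := by
  rw [continuous_def]
  intro G hG
  rw [@isOpen_iff_forall_mem_open _ (sTop X)]
  intro U hU
  obtain ⟨K, hK_nhds, hKG, hK⟩ := local_compact_nhds (hG.mem_nhds hU)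
  have hU_le : ↑U ≤ 𝓝 (r U) := Ultrafilter.clusterPt_iff.1 ((hr U (r U)).2 le_rfl)
  refine ⟨{V | interior K ∈ V}, fun V hV => ?_, isOpen_sTop_setOf_mem isOpen_interior,
    hU_le (interior_mem_nhds.2 hK_nhds)⟩
  obtain ⟨x, hxK, hx⟩ := hK (le_principal_iff.2 (mem_of_superset hV interior_subset))
  exact ((hr V x).1 hx).mem_open hG (hKG hxK)

theorem apply_pure_of_clusterPt_iff_specializes [T0Space X] {r : Ultrafilter X → X}
    (hr : ∀ (U : Ultrafilter X) (x : X), ClusterPt x ↑U ↔ r U ⤳ x) (x : X) : r (pure x) = x := by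
  have hpure : ∀ z, r (pure x) ⤳ z ↔ x ⤳ z := fun z => by
    rw [← hr, specializes_iff_clusterPt, Ultrafilter.coe_pure]
  exact (((hpure x).2 le_rfl).antisymm ((hpure _).1 le_rfl)).eq

end

/-- Proposition 4.3: for `X` a T0, locally compact, supercompact space
there is a continuous `r : W(X) → X` with `r (pure x) = x` for all `x`, and such that
for every ultrafilter `U` on `X` the set of cluster points of `U` equals the closure
of `{r U}`. -/
theorem stmt11 (X : Type*) [TopologicalSpace X] [T0Space X] [LocallyCompactSpace X]
    (hsc : ∀ V : Ultrafilter X, ∃ y : X, {z : X | ClusterPt z ↑V} = closure {y}) :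
    ∃ r : Ultrafilter X → X,
      @Continuous (Ultrafilter X) X (sTop X) _ r ∧
      (∀ x : X, r (pure x) = x) ∧
      (∀ U : Ultrafilter X, {z : X | ClusterPt z ↑U} = closure {r U}) := by
  choose r hr using hsc
  have hspec : ∀ (U : Ultrafilter X) (x : X), ClusterPt x ↑U ↔ r U ⤳ x := fun U x => by
    rw [specializes_iff_mem_closure, ← hr U, Set.mem_ofPred_eq]
  exact ⟨r, continuous_sTop_of_clusterPt_iff_specializes hspec,
    apply_pure_of_clusterPt_iff_specializes hspec, hr⟩
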